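/- Let f_1, ..., f_N : ℝ^n → ℝ be twice continuously differentiable functions such that for every i and every x ∈ ℝ^n the Hessian ∇²f_i(x) is symmetric with all eigenvalues in [μ, L], where 0 < μ ≤ L. Let W be a real symmetric doubly stochastic N × N matrix with smallest eigenvalue λ_min(W), and let α > 0. Define the distributed gradient descent map T : (ℝ^n)^N → (ℝ^n)^N by T(z)_i = ∑_{j=1}^N W_{ij} z_j − α∇f_i(z_i). Then T is Lipschitz continuous with Lipschitz constant ζ'' = max{|1 − αμ|, |λ_min(W) − αL|} with respect to the Euclidean norm on (ℝ^n)^N. -/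

import Mathlib

/-!
The map `T` is differentiable, and its derivative at `x` is the block operator
`v ↦ (∑ⱼ W i j • v j - α • ∇²f_i(x_i) v_i)ᵢ`, which is self-adjoint. Its quadratic form lies between
`(λmin(W) - αL)‖v‖²` and `(1 - αμ)‖v‖²`: the lower bound because `W - λmin(W) • 1` is positive
semidefinite (Schur product theorem against the Gram matrix of the blocks), the upper bound because
`∑ᵢⱼ W i j ⟪v i, v j⟫ ≤ ∑ᵢ ‖v i‖²` for doubly stochastic `W`. A self-adjoint operator with
quadratic form in `[a, b]` has norm at most `max |a| |b|`, and the mean value inequality concludes.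
-/

open scoped RealInnerProductSpace MatrixOrder

section MatrixForms

variable {ι E : Type*} [Fintype ι] [NormedAddCommGroup E] [InnerProductSpace ℝ E]

theorem Matrix.PosSemidef.sum_mul_inner_nonneg {A : Matrix ι ι ℝ} (hA : A.PosSemidef)
    (v : ι → E) : 0 ≤ ∑ i, ∑ j, A i j * ⟪v i, v j⟫ := by
  simpa [dotProduct, Matrix.mulVec, Matrix.hadamard] using
    (hA.hadamard (Matrix.posSemidef_gram ℝ v)).dotProduct_mulVec_nonneg 1

theorem Matrix.IsHermitian.inf'_eigenvalues_mul_sum_norm_sq_le [DecidableEq ι] [Nonempty ι]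
    {W : Matrix ι ι ℝ} (hW : W.IsHermitian) (v : ι → E) :
    Finset.univ.inf' Finset.univ_nonempty hW.eigenvalues * ∑ i, ‖v i‖ ^ 2 ≤
      ∑ i, ∑ j, W i j * ⟪v i, v j⟫ := by
  set lam := Finset.univ.inf' Finset.univ_nonempty hW.eigenvalues
  have hpsd : (W - algebraMap ℝ _ lam).PosSemidef := by
    rw [← Matrix.le_iff, algebraMap_le_iff_le_spectrum hW.isSelfAdjoint,
      hW.spectrum_real_eq_range_eigenvalues]
    rintro _ ⟨i, rfl⟩
    exact Finset.inf'_le _ (Finset.mem_univ i)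
  have := hpsd.sum_mul_inner_nonneg v
  simp only [Matrix.sub_apply, Matrix.algebraMap_matrix_apply, sub_mul, Finset.sum_sub_distrib,
    ite_mul, zero_mul, Finset.sum_ite_eq, Algebra.algebraMap_self_apply, Finset.mem_univ, if_true,
    real_inner_self_eq_norm_sq, ← Finset.mul_sum] at this
  linarith

theorem Matrix.sum_mul_inner_le_sum_norm_sq_of_mem_doublyStochastic [DecidableEq ι]
    {W : Matrix ι ι ℝ} (hW : W ∈ doublyStochastic ℝ ι) (v : ι → E) :
    ∑ i, ∑ j, W i j * ⟪v i, v j⟫ ≤ ∑ i, ‖v i‖ ^ 2 := by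
  rw [mem_doublyStochastic_iff_sum] at hW
  obtain ⟨hnonneg, hrow, hcol⟩ := hW
  calc ∑ i, ∑ j, W i j * ⟪v i, v j⟫
      ≤ ∑ i, ∑ j, (W i j * ‖v i‖ ^ 2 / 2 + W i j * ‖v j‖ ^ 2 / 2) := by
        gcongr with i _ j _
        -- `2 ⟪a, b⟫ ≤ ‖a‖² + ‖b‖²`
        nlinarith [hnonneg i j, real_inner_le_norm (v i) (v j), sq_nonneg (‖v i‖ - ‖v j‖)]
    _ = ∑ i, ‖v i‖ ^ 2 := by
        simp only [Finset.sum_add_distrib, ← Finset.sum_div, ← Finset.sum_mul, hrow, one_mul]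
        rw [Finset.sum_comm (f := fun i j => W i j * ‖v j‖ ^ 2)]
        simp only [← Finset.sum_mul, hcol, one_mul]
        ring

end MatrixForms

theorem ContinuousLinearMap.opNorm_le_max_abs_of_isSymmetric {E : Type*} [NormedAddCommGroup E]
    [InnerProductSpace ℝ E] (T : E →L[ℝ] E) (hT : (T : E →ₗ[ℝ] E).IsSymmetric) {a b : ℝ}
    (h : ∀ x, a * ‖x‖ ^ 2 ≤ ⟪T x, x⟫ ∧ ⟪T x, x⟫ ≤ b * ‖x‖ ^ 2) : ‖T‖ ≤ max |a| |b| := by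
  rw [T.norm_eq_iSup_rayleighQuotient hT]
  refine ciSup_le fun x => ?_
  rcases eq_or_ne x 0 with rfl | hx
  · simp
  have hx2 : 0 < ‖x‖ ^ 2 := by positivity
  obtain ⟨ha, hb⟩ := h x
  refine abs_le_max_abs_abs ?_ ?_ <;>
    simp only [rayleighQuotient, reApplyInnerSelf_apply, RCLike.re_to_real]
  · rwa [le_div_iff₀ hx2]
  · rwa [div_le_iff₀ hx2]

theorem ContDiff.differentiable_gradient {E : Type*} [NormedAddCommGroup E]
    [InnerProductSpace ℝ E] [CompleteSpace E] {f : E → ℝ} (hf : ContDiff ℝ 2 f) :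
    Differentiable ℝ (gradient f) :=
  (InnerProductSpace.toDual ℝ E).symm.differentiable.comp
    ((hf.fderiv_right (by norm_num)).differentiable one_ne_zero)

section DistributedGradientDescent

variable {ι E : Type*} [Fintype ι] [NormedAddCommGroup E] [InnerProductSpace ℝ E]
  {W : Matrix ι ι ℝ} {α : ℝ}

noncomputable def dgdMap (W : Matrix ι ι ℝ) (α : ℝ) (g : ι → E → E)
    (z : PiLp 2 fun _ : ι => E) : PiLp 2 fun _ : ι => E :=
  WithLp.toLp 2 fun i => ∑ j, W i j • z j - α • g i (z i)

noncomputable def dgdDeriv (W : Matrix ι ι ℝ) (α : ℝ) (D : ι → E →L[ℝ] E) :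
    (PiLp 2 fun _ : ι => E) →L[ℝ] PiLp 2 fun _ : ι => E :=
  (PiLp.continuousLinearEquiv 2 ℝ _).symm.toContinuousLinearMap ∘L
    ContinuousLinearMap.pi fun i => ∑ j, W i j • PiLp.proj 2 _ j - α • (D i ∘L PiLp.proj 2 _ i)

theorem dgdDeriv_apply (D : ι → E →L[ℝ] E) (v : PiLp 2 fun _ : ι => E) (i : ι) :
    dgdDeriv W α D v i = ∑ j, W i j • v j - α • D i (v i) := by
  simp [dgdDeriv]

theorem hasFDerivAt_dgdMap {g : ι → E → E} (hg : ∀ i, Differentiable ℝ (g i))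
    (z : PiLp 2 fun _ : ι => E) :
    HasFDerivAt (dgdMap W α g) (dgdDeriv W α fun i => fderiv ℝ (g i) (z i)) z := by
  rw [← hasFDerivWithinAt_univ, hasFDerivWithinAt_piLp]
  intro i
  rw [hasFDerivWithinAt_univ]
  exact (HasFDerivAt.fun_sum fun j _ => (PiLp.hasFDerivAt_apply 2 z j).const_smul (W i j)).sub
    (((hg i (z i)).hasFDerivAt.comp z (PiLp.hasFDerivAt_apply 2 z i)).const_smul α)

theorem inner_dgdDeriv_self (D : ι → E →L[ℝ] E) (v : PiLp 2 fun _ : ι => E) :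
    ⟪dgdDeriv W α D v, v⟫ = ∑ i, ∑ j, W i j * ⟪v i, v j⟫ - α * ∑ i, ⟪D i (v i), v i⟫ := by
  simp only [PiLp.inner_apply, dgdDeriv_apply, inner_sub_left, sum_inner, real_inner_smul_left,
    Finset.sum_sub_distrib, Finset.mul_sum]
  simp only [real_inner_comm (v _) (v _)]

theorem isSymmetric_dgdDeriv (hW : W.IsHermitian) {D : ι → E →L[ℝ] E}
    (hD : ∀ i, (D i : E →ₗ[ℝ] E).IsSymmetric) :
    (dgdDeriv W α D : (PiLp 2 fun _ : ι => E) →ₗ[ℝ] _).IsSymmetric := by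
  intro u v
  simp only [ContinuousLinearMap.coe_coe, PiLp.inner_apply, dgdDeriv_apply, inner_sub_left,
    inner_sub_right, sum_inner, inner_sum, real_inner_smul_left, real_inner_smul_right,
    Finset.sum_sub_distrib]
  congr 1
  · rw [Finset.sum_comm]
    refine Finset.sum_congr rfl fun i _ => Finset.sum_congr rfl fun j _ => ?_
    rw [← hW.apply j i, star_trivial, real_inner_comm]
  · exact Finset.sum_congr rfl fun i _ => congrArg (α * ·) (hD i _ _)

variable [DecidableEq ι] [Nonempty ι] {μ L : ℝ}

theorem norm_dgdDeriv_le (hW : W.IsHermitian) (hWds : W ∈ doublyStochastic ℝ ι) (hα : 0 ≤ α)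
    {D : ι → E →L[ℝ] E} (hD : ∀ i, (D i : E →ₗ[ℝ] E).IsSymmetric)
    (hDbd : ∀ i v, μ * ‖v‖ ^ 2 ≤ ⟪D i v, v⟫ ∧ ⟪D i v, v⟫ ≤ L * ‖v‖ ^ 2) :
    ‖dgdDeriv W α D‖ ≤
      max |1 - α * μ| |Finset.univ.inf' Finset.univ_nonempty hW.eigenvalues - α * L| := by
  rw [max_comm]
  refine (dgdDeriv W α D).opNorm_le_max_abs_of_isSymmetric (isSymmetric_dgdDeriv hW hD) fun v => ?_
  rw [inner_dgdDeriv_self, PiLp.norm_sq_eq_of_L2]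
  have hW_lower := hW.inf'_eigenvalues_mul_sum_norm_sq_le v
  have hW_upper := Matrix.sum_mul_inner_le_sum_norm_sq_of_mem_doublyStochastic hWds v
  have hD_lower : μ * ∑ i, ‖v i‖ ^ 2 ≤ ∑ i, ⟪D i (v i), v i⟫ := by
    rw [Finset.mul_sum]
    exact Finset.sum_le_sum fun i _ => (hDbd i (v i)).1
  have hD_upper : ∑ i, ⟪D i (v i), v i⟫ ≤ L * ∑ i, ‖v i‖ ^ 2 := by
    rw [Finset.mul_sum]
    exact Finset.sum_le_sum fun i _ => (hDbd i (v i)).2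
  constructor
  · linarith [mul_le_mul_of_nonneg_left hD_upper hα]
  · linarith [mul_le_mul_of_nonneg_left hD_lower hα]

theorem norm_dgdMap_sub_le (hW : W.IsHermitian) (hWds : W ∈ doublyStochastic ℝ ι) (hα : 0 ≤ α)
    {g : ι → E → E} (hg : ∀ i, Differentiable ℝ (g i))
    (hg_symm : ∀ i x, (fderiv ℝ (g i) x : E →ₗ[ℝ] E).IsSymmetric)
    (hg_bd : ∀ i x v,
      μ * ‖v‖ ^ 2 ≤ ⟪fderiv ℝ (g i) x v, v⟫ ∧ ⟪fderiv ℝ (g i) x v, v⟫ ≤ L * ‖v‖ ^ 2)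
    (z w : PiLp 2 fun _ : ι => E) :
    ‖dgdMap W α g z - dgdMap W α g w‖ ≤
      max |1 - α * μ| |Finset.univ.inf' Finset.univ_nonempty hW.eigenvalues - α * L| *
        ‖z - w‖ :=
  convex_univ.norm_image_sub_le_of_norm_hasFDerivWithin_le
    (fun x _ => (hasFDerivAt_dgdMap hg x).hasFDerivWithinAt)
    (fun x _ => norm_dgdDeriv_le hW hWds hα (fun i => hg_symm i (x i)) (fun i => hg_bd i (x i)))
    trivial trivial

end DistributedGradientDescent

theorem stmt4_general {n N : ℕ} [NeZero N]
    (f : Fin N → EuclideanSpace ℝ (Fin n) → ℝ) (μ L α : ℝ)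
    (hα : 0 < α)
    (hC2 : ∀ i, ContDiff ℝ 2 (f i))
    (hHsym : ∀ i x u v, ⟪fderiv ℝ (gradient (f i)) x u, v⟫ =
      ⟪u, fderiv ℝ (gradient (f i)) x v⟫)
    (hHess : ∀ i x v, μ * ‖v‖ ^ 2 ≤ ⟪fderiv ℝ (gradient (f i)) x v, v⟫ ∧
      ⟪fderiv ℝ (gradient (f i)) x v, v⟫ ≤ L * ‖v‖ ^ 2)
    (W : Matrix (Fin N) (Fin N) ℝ) (hW : W.IsHermitian)
    (hWnn : ∀ i j, 0 ≤ W i j)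
    (hWrow : ∀ i, ∑ j, W i j = 1)
    (hWcol : ∀ j, ∑ i, W i j = 1)
    (T : (PiLp 2 fun _ : Fin N => EuclideanSpace ℝ (Fin n)) →
      PiLp 2 fun _ : Fin N => EuclideanSpace ℝ (Fin n))
    (hT : ∀ z i, T z i = ∑ j, W i j • z j - α • gradient (f i) (z i)) :
    ∀ z w, ‖T z - T w‖ ≤
      max |1 - α * μ|
        |Finset.univ.inf' Finset.univ_nonempty hW.eigenvalues - α * L| * ‖z - w‖ := by
  have hT_eq : T = dgdMap W α fun i => gradient (f i) := funext fun z => PiLp.ext (hT z)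
  subst hT_eq
  exact norm_dgdMap_sub_le hW (mem_doublyStochastic_iff_sum.2 ⟨hWnn, hWrow, hWcol⟩) hα.le
    (fun i => (hC2 i).differentiable_gradient) hHsym hHess

/-- The distributed gradient descent map
`T(z)_i = ∑_j W i j • z j − α • ∇f_i(z_i)` is Lipschitz with constant
`ζ'' = max |1 − αμ| |λmin(W) − αL|`, when each `f i` is `C²` with symmetric Hessian whose
eigenvalues lie in `[μ, L]` and `W` is symmetric doubly stochastic. -/
theorem stmt4 {n N : ℕ} [NeZero N]
    (f : Fin N → EuclideanSpace ℝ (Fin n) → ℝ) (μ L α : ℝ)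
    (hμ : 0 < μ) (hμL : μ ≤ L) (hα : 0 < α)
    (hC2 : ∀ i, ContDiff ℝ 2 (f i))
    (hHsym : ∀ i x u v, ⟪fderiv ℝ (gradient (f i)) x u, v⟫ =
      ⟪u, fderiv ℝ (gradient (f i)) x v⟫)
    (hHess : ∀ i x v, μ * ‖v‖ ^ 2 ≤ ⟪fderiv ℝ (gradient (f i)) x v, v⟫ ∧
      ⟪fderiv ℝ (gradient (f i)) x v, v⟫ ≤ L * ‖v‖ ^ 2)
    (W : Matrix (Fin N) (Fin N) ℝ) (hW : W.IsHermitian)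
    (hWnn : ∀ i j, 0 ≤ W i j)
    (hWrow : ∀ i, ∑ j, W i j = 1)
    (hWcol : ∀ j, ∑ i, W i j = 1)
    (T : (PiLp 2 fun _ : Fin N => EuclideanSpace ℝ (Fin n)) →
      PiLp 2 fun _ : Fin N => EuclideanSpace ℝ (Fin n))
    (hT : ∀ z i, T z i = ∑ j, W i j • z j - α • gradient (f i) (z i)) :
    ∀ z w, ‖T z - T w‖ ≤
      max |1 - α * μ|
        |Finset.univ.inf' Finset.univ_nonempty hW.eigenvalues - α * L| * ‖z - w‖ :=
  stmt4_general f μ L α hα hC2 hHsym hHess W hW hWnn hWrow hWcol T hT
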